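/- Suppose lim_{x→a⁺} s(x) = ∞, the right boundary b is natural (lim_{x→b} s(x)·M[a,x] = ∞ and ∫_{x₀}^{b} M[x₀,v] s(v) dv = ∞), μ extends continuously to x = a with a finite value μ(a), there exists x̂₀ ∈ (a,b) such that μ is strictly increasing on (a, x̂₀) and both c and μ are concave on (x̂₀, b), and there exist K₀ > 0 and a pair (w̃,ỹ) with a < w̃ < ỹ < b and F_{K₀}(w̃,ỹ) > γ c̄(b). For each K ∈ (0, K₀], let F*_K = sup_{𝓡} F_K and let (w*_K, y*_K) denote the unique maximizing pair of F_K, and let ŷ be the unique maximizer of h on (a,b). Then F*_K is strictly decreasing in K, F*_K < h(ŷ) for every K > 0, lim_{K→0⁺} F*_K = h(ŷ), and both w*_K → ŷ and y*_K → ŷ as K → 0⁺. -/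

import Mathlib

open MeasureTheory Filter Set Topology
open scoped Classical

noncomputable section

/-- The state interval `(a, b)` where `a` is real and `b ∈ (a, ∞]`. -/
def stInt (a : ℝ) (b : EReal) : Set ℝ := {x : ℝ | a < x ∧ (x : EReal) < b}

/-- The filter of approach to the right endpoint `b ∈ (a, ∞]`:
`atTop` when `b = ∞`, and the left-neighborhood filter of `b` otherwise. -/
def atB (b : EReal) : Filter ℝ :=
  if b = ⊤ then Filter.atTop else nhdsWithin b.toReal (Set.Iio b.toReal)

/-- The scale density `s(x) = exp(-∫_{x₀}^x 2μ/σ²)`. -/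
def sDen (μ σ : ℝ → ℝ) (x₀ x : ℝ) : ℝ :=
  Real.exp (-(∫ y in x₀..x, 2 * μ y / (σ y) ^ 2))

/-- The speed density `m(x) = 2/(σ(x)² s(x))`. -/
def mDen (μ σ : ℝ → ℝ) (x₀ x : ℝ) : ℝ :=
  2 / ((σ x) ^ 2 * sDen μ σ x₀ x)

/-- `M[a,x] = ∫_a^x m(u) du`. -/
def Mab (μ σ : ℝ → ℝ) (x₀ a x : ℝ) : ℝ :=
  ∫ u in Set.Ioo a x, mDen μ σ x₀ u

/-- The time potential `ξ(x) = ∫_{x₀}^x M[a,v] s(v) dv`. -/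
def xiF (μ σ : ℝ → ℝ) (x₀ a x : ℝ) : ℝ :=
  ∫ v in x₀..x, Mab μ σ x₀ a v * sDen μ σ x₀ v

/-- The running reward potential `g(x) = ∫_{x₀}^x (∫_a^v c(u) m(u) du) s(v) dv`. -/
def gF (μ σ c : ℝ → ℝ) (x₀ a x : ℝ) : ℝ :=
  ∫ v in x₀..x, (∫ u in Set.Ioo a v, c u * mDen μ σ x₀ u) * sDen μ σ x₀ v

/-- `h(x) = (∫_a^x (γ c(u) + p μ(u)) m(u) du) / M[a,x]`. -/
def hF (μ σ c : ℝ → ℝ) (x₀ a p γ x : ℝ) : ℝ :=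
  (∫ u in Set.Ioo a x, (γ * c u + p * μ u) * mDen μ σ x₀ u) / Mab μ σ x₀ a x

/-- The long-term average reward `F(w,y)` of the `(w,y)`-impulse policy. -/
def FF (μ σ c : ℝ → ℝ) (x₀ a p K γ w y : ℝ) : ℝ :=
  (p * (y - w) - K + γ * (gF μ σ c x₀ a y - gF μ σ c x₀ a w)) /
    (xiF μ σ x₀ a y - xiF μ σ x₀ a w)

/-- `c̄(b)`: equals `⟨c,π⟩` when `M[a,b] < ∞` and the boundary value `c(b)` otherwise. -/
def cbar (μ σ c : ℝ → ℝ) (x₀ a : ℝ) (b : EReal) (cb : ℝ) : ℝ :=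
  if MeasureTheory.IntegrableOn (mDen μ σ x₀) (stInt a b) MeasureTheory.volume then
    (∫ u in stInt a b, c u * mDen μ σ x₀ u) / (∫ u in stInt a b, mDen μ σ x₀ u)
  else cb

/-!
With `N(x) = ∫_a^x (γ c + p μ) m = h(x) M[a,x]`, the identity `∫_a^x μ m = 1/s(x)` (this is where
`s(a+) = ∞` enters) gives `p (y - w) + γ (g y - g w) = ∫_w^y h dξ`, so
`F_K(w,y) = A(w,y) - K / (ξ y - ξ w)` where `A(w,y)` is the `dξ`-mean of `h` over `[w,y]`.
Since `A ≤ h(ŷ)`, the optimal value is `< h(ŷ)` and strictly decreasing in `K`, and means over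
short intervals around `ŷ` show that it tends to `h(ŷ)`.

For the optimisers, `h` stays a fixed amount below `h(ŷ)` outside every neighbourhood of `ŷ`:
near `a` because there `h` is an `m`-average of the increasing `γ c + p μ`, whose value at `a` is
below `h(ŷ)`; near `b` because `h ≤ γ c̄(b) + p / (s M)`, with `γ c̄(b) < F_{K₀}(w̃,ỹ) < h(ŷ)` and
`s M → ∞`; in between by compactness. Hence the mean of `h` over any interval leaving a
neighbourhood of `ŷ` is uniformly below `h(ŷ)`, which forces `w*_K, y*_K → ŷ`.
-/

namespace ImpulseControl

section Interval

variable {a : ℝ} {b : EReal}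

lemma stInt_eq (hab : (a : EReal) < b) :
    (b = ⊤ ∧ stInt a b = Ioi a) ∨ ∃ b' : ℝ, b = b' ∧ stInt a b = Ioo a b' := by
  by_cases hb : b = ⊤
  · exact Or.inl ⟨hb, by ext x; simp [stInt, hb]⟩
  · lift b to ℝ using ⟨hb, hab.ne_bot⟩
    exact Or.inr ⟨b, rfl, by ext x; simp [stInt]⟩

lemma isOpen_stInt (hab : (a : EReal) < b) : IsOpen (stInt a b) := by
  rcases stInt_eq hab with ⟨-, h⟩ | ⟨b', -, h⟩ <;> rw [h]
  exacts [isOpen_Ioi, isOpen_Ioo]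

lemma ordConnected_stInt (hab : (a : EReal) < b) : (stInt a b).OrdConnected := by
  rcases stInt_eq hab with ⟨-, h⟩ | ⟨b', -, h⟩ <;> rw [h]
  exacts [ordConnected_Ioi, ordConnected_Ioo]

lemma Ioc_subset_stInt {x : ℝ} (hx : x ∈ stInt a b) : Ioc a x ⊆ stInt a b :=
  fun _ hu => ⟨hu.1, lt_of_le_of_lt (by exact_mod_cast hu.2) hx.2⟩

lemma nhdsGT_hasBasis_stInt (hab : (a : EReal) < b) :
    (𝓝[>] a).HasBasis (· ∈ stInt a b) (Ioo a) := by
  obtain ⟨x, hx⟩ := EReal.exists_between_coe_real hab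
  refine (nhdsGT_basis a).to_hasBasis (fun t (ht : a < t) => ⟨min t x, ?_, ?_⟩)
    fun t ht => ⟨t, ht.1, subset_rfl⟩
  · exact Ioc_subset_stInt (b := b) ⟨by exact_mod_cast hx.1, hx.2⟩
      ⟨lt_min ht (by exact_mod_cast hx.1), min_le_right _ _⟩
  · exact Ioo_subset_Ioo_right (min_le_left _ _)

lemma atB_hasBasis (hab : (a : EReal) < b) :
    (atB b).HasBasis (· ∈ stInt a b) (fun t => Ioi t ∩ stInt a b) := by
  obtain ⟨x, hx⟩ := EReal.exists_between_coe_real hab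
  rcases stInt_eq hab with ⟨hb, hS⟩ | ⟨b', rfl, hS⟩
  · rw [atB, if_pos hb, hS]
    refine (atTop_basis_Ioi' a).to_hasBasis (fun t ht => ⟨t, ht, inter_subset_left⟩)
      fun t (ht : a < t) => ⟨t, ht, subset_inter subset_rfl fun u hu => ht.trans hu⟩
  · have hxb : x < b' := by exact_mod_cast hx.2
    rw [atB, if_neg (EReal.coe_ne_top b'), EReal.toReal_coe, hS]
    refine (nhdsLT_basis b').to_hasBasis (fun t (ht : t < b') => ⟨max t x, ?_, ?_⟩)
      fun t ht => ⟨t, ht.2, fun u hu => ⟨hu.1, ht.1.trans hu.1, hu.2⟩⟩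
    · exact ⟨lt_max_of_lt_right (by exact_mod_cast hx.1), max_lt ht hxb⟩
    · exact fun u hu => ⟨(le_max_left _ _).trans_lt hu.1, hu.2.2⟩

instance atB_neBot : (atB b).NeBot := by
  unfold atB; split_ifs <;> infer_instance

lemma MonotoneOn.le_of_tendsto_atB {c : ℝ → ℝ} {cb : ℝ}
    (hab : (a : EReal) < b) (hcmono : MonotoneOn c (stInt a b)) (hcb : Tendsto c (atB b) (𝓝 cb))
    {u : ℝ} (hu : u ∈ stInt a b) : c u ≤ cb :=
  ge_of_tendsto hcb <| (atB_hasBasis hab).eventually_iff.2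
    ⟨u, hu, fun _ hx => hcmono hu hx.2 (le_of_lt hx.1)⟩

end Interval

section ImproperIntegral

variable {f : ℝ → ℝ} {a x : ℝ}

lemma setIntegral_Ioo_eq_intervalIntegral (hax : a ≤ x) :
    ∫ u in Ioo a x, f u = ∫ u in a..x, f u := by
  rw [intervalIntegral.integral_of_le hax, integral_Ioc_eq_integral_Ioo]

lemma setIntegral_Ioo_pos (hax : a < x) (hf : IntegrableOn f (Ioo a x))
    (hpos : ∀ u ∈ Ioo a x, 0 < f u) : 0 < ∫ u in Ioo a x, f u := by
  rw [setIntegral_Ioo_eq_intervalIntegral hax.le]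
  exact intervalIntegral.intervalIntegral_pos_of_pos_on
    ((intervalIntegrable_iff_integrableOn_Ioo_of_le hax.le).2 hf) hpos hax

lemma continuousOn_setIntegral_Ioo {S : Set ℝ} (hSo : IsOpen S) (hSa : S ⊆ Ioi a)
    (hf : ContinuousOn f S) (hint : ∀ x ∈ S, IntegrableOn f (Ioo a x)) :
    ContinuousOn (fun x => ∫ u in Ioo a x, f u) S := by
  intro x hx
  have hax : a < x := hSa hx
  have hderiv : HasDerivAt (fun t => ∫ u in a..t, f u) (f x) x :=
    intervalIntegral.integral_hasDerivAt_right
      ((intervalIntegrable_iff_integrableOn_Ioo_of_le hax.le).2 (hint x hx))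
      (hf.stronglyMeasurableAtFilter hSo x hx) (hf.continuousAt (hSo.mem_nhds hx))
  refine (hderiv.continuousAt.congr ?_).continuousWithinAt
  filter_upwards [Ioi_mem_nhds hax] with t ht
  exact (setIntegral_Ioo_eq_intervalIntegral ht.le).symm

lemma setIntegral_Ioo_eq_of_hasDerivAt {F : ℝ → ℝ} (hax : a < x)
    (hF : ∀ t ∈ Ioc a x, HasDerivAt F (f t) t) (hf : IntegrableOn f (Ioo a x))
    (hlim : Tendsto F (𝓝[>] a) (𝓝 0)) : ∫ u in Ioo a x, f u = F x := by
  have hfi : IntegrableOn f (Icc a x) := (integrableOn_Icc_iff_integrableOn_Ioo).2 hf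
  have hprim : Tendsto (fun u => ∫ t in u..x, f t) (𝓝[>] a) (𝓝 (∫ t in a..x, f t)) := by
    have := intervalIntegral.continuousOn_primitive_interval_left
      (by rwa [uIcc_of_le hax.le]) a left_mem_uIcc
    rw [uIcc_of_le hax.le] at this
    exact (this.mono Ioc_subset_Icc_self).tendsto.mono_left
      (nhdsWithin_Ioc_eq_nhdsGT hax).ge
  have hFTC : ∀ᶠ u in 𝓝[>] a, ∫ t in u..x, f t = F x - F u := by
    filter_upwards [Ioo_mem_nhdsGT hax] with u hu
    have hux : uIcc u x ⊆ Ioc a x := by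
      rw [uIcc_of_le hu.2.le]; exact Icc_subset_Ioc hu.1 le_rfl
    exact intervalIntegral.integral_eq_sub_of_hasDerivAt (fun t ht => hF t (hux ht))
      (hfi.mono_set (hux.trans Ioc_subset_Icc_self)).intervalIntegrable
  rw [setIntegral_Ioo_eq_intervalIntegral hax.le]
  refine tendsto_nhds_unique hprim ?_
  simpa using (tendsto_const_nhds.sub hlim).congr' (hFTC.mono fun u hu => hu.symm)

lemma integrableOn_Ioo_mul_of_tendsto {φ m : ℝ → ℝ} {L : ℝ} (hφ : ContinuousOn φ (Ioc a x))
    (hm : ContinuousOn m (Ioc a x)) (hmi : IntegrableOn m (Ioo a x))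
    (hlim : Tendsto φ (𝓝[>] a) (𝓝 L)) : IntegrableOn (fun u => φ u * m u) (Ioo a x) := by
  rcases le_or_gt x a with hxa | hax
  · simp [Ioo_eq_empty_of_le hxa]
  obtain ⟨t, ht, hbdd⟩ := mem_nhdsGT_iff_exists_Ioo_subset.1
    (hlim.abs.eventually (eventually_le_nhds (lt_add_one |L|)))
  set t' := min t x
  have hat' : a < t' := lt_min ht hax
  have hnear : IntegrableOn (fun u => φ u * m u) (Ioo a t') := by
    refine (hmi.mono_set (Ioo_subset_Ioo_right (min_le_right _ _))).norm.const_mul (|L| + 1)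
      |>.mono' ((hφ.mul hm).mono (Ioo_subset_Ioc_self.trans ?_) |>.aestronglyMeasurable
        measurableSet_Ioo) ?_
    · exact Ioc_subset_Ioc_right (min_le_right _ _)
    · filter_upwards [ae_restrict_mem measurableSet_Ioo] with u hu
      rw [norm_mul, Real.norm_eq_abs]
      exact mul_le_mul_of_nonneg_right
        (hbdd ⟨hu.1, hu.2.trans_le (min_le_left _ _)⟩) (norm_nonneg _)
  have hfar : IntegrableOn (fun u => φ u * m u) (Icc t' x) :=
    ((hφ.mul hm).mono (Icc_subset_Ioc_iff (min_le_right _ _) |>.2 ⟨hat', le_rfl⟩)).integrableOn_Icc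
  exact (hnear.union hfar).mono_set fun u hu =>
    (lt_or_ge u t').imp (fun h => ⟨hu.1, h⟩) fun h => ⟨h, hu.2.le⟩

lemma StrictMonoOn.lt_of_tendsto_nhdsGT {φ : ℝ → ℝ} {xhat L : ℝ}
    (hmono : StrictMonoOn φ (Ioo a xhat)) (hlim : Tendsto φ (𝓝[>] a) (𝓝 L)) {u : ℝ}
    (hu : u ∈ Ioo a xhat) : L < φ u := by
  obtain ⟨t, ht⟩ := exists_between hu.1
  have htx : t ∈ Ioo a xhat := ⟨ht.1, ht.2.trans hu.2⟩
  have hL : L ≤ φ t := le_of_tendsto hlim <| by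
    filter_upwards [Ioo_mem_nhdsGT ht.1] with z hz
    exact (hmono ⟨hz.1, hz.2.trans htx.2⟩ htx hz.2).le
  exact hL.trans_lt (hmono htx hu ht.2)

/-- Chebyshev's inequality, cross-multiplied: the `m`-average of `c` over `A` is at most its
`m`-average over `A ∪ B`. -/
lemma setIntegral_mul_le_of_le_of_le {m c : ℝ → ℝ} {A B : Set ℝ} {k : ℝ}
    (hAB : Disjoint A B) (hA : MeasurableSet A) (hB : MeasurableSet B)
    (hmA : IntegrableOn m A) (hmB : IntegrableOn m B)
    (hcmA : IntegrableOn (fun u => c u * m u) A) (hcmB : IntegrableOn (fun u => c u * m u) B)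
    (hm : ∀ u ∈ A ∪ B, 0 ≤ m u) (hcA : ∀ u ∈ A, c u ≤ k) (hcB : ∀ u ∈ B, k ≤ c u) :
    (∫ u in A, c u * m u) * ∫ u in A ∪ B, m u ≤ (∫ u in A ∪ B, c u * m u) * ∫ u in A, m u := by
  rw [setIntegral_union hAB hB hmA hmB, setIntegral_union hAB hB hcmA hcmB]
  have hA1 : ∫ u in A, c u * m u ≤ k * ∫ u in A, m u := by
    rw [← integral_const_mul]
    exact setIntegral_mono_on hcmA (hmA.const_mul k) hA fun u hu =>
      mul_le_mul_of_nonneg_right (hcA u hu) (hm u (Or.inl hu))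
  have hB1 : k * ∫ u in B, m u ≤ ∫ u in B, c u * m u := by
    rw [← integral_const_mul]
    exact setIntegral_mono_on (hmB.const_mul k) hcmB hB fun u hu =>
      mul_le_mul_of_nonneg_right (hcB u hu) (hm u (Or.inr hu))
  have hA0 : 0 ≤ ∫ u in A, m u := setIntegral_nonneg hA fun u hu => hm u (Or.inl hu)
  have hB0 : 0 ≤ ∫ u in B, m u := setIntegral_nonneg hB fun u hu => hm u (Or.inr hu)
  nlinarith [mul_le_mul_of_nonneg_right hA1 hB0, mul_le_mul_of_nonneg_right hB1 hA0]

end ImproperIntegral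

def weightedMean (ω h : ℝ → ℝ) (w y : ℝ) : ℝ :=
  (∫ v in w..y, h v * ω v) / ∫ v in w..y, ω v

section WeightedMean

variable {S : Set ℝ} {ω h : ℝ → ℝ} {w y H δ : ℝ}

lemma intervalIntegral_pos_of_forall_pos (hS : S.OrdConnected) (hω : ContinuousOn ω S)
    (hω0 : ∀ v ∈ S, 0 < ω v) (hw : w ∈ S) (hy : y ∈ S) (hwy : w < y) :
    0 < ∫ v in w..y, ω v :=
  intervalIntegral.intervalIntegral_pos_of_pos_on
    (hω.mono (hS.uIcc_subset hw hy)).intervalIntegrable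
    (fun _ hv => hω0 _ (hS.out hw hy (Ioo_subset_Icc_self hv))) hwy

lemma sub_weightedMean (hS : S.OrdConnected) (hh : ContinuousOn h S) (hω : ContinuousOn ω S)
    (hω0 : ∀ v ∈ S, 0 < ω v) (hw : w ∈ S) (hy : y ∈ S) (hwy : w < y) :
    H - weightedMean ω h w y = (∫ v in w..y, (H - h v) * ω v) / ∫ v in w..y, ω v := by
  have hsub := hS.uIcc_subset hw hy
  have hν := intervalIntegral_pos_of_forall_pos hS hω hω0 hw hy hwy
  have hhω : IntervalIntegrable (fun v => h v * ω v) volume w y :=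
    ((hh.mul hω).mono hsub).intervalIntegrable
  simp_rw [sub_mul]
  rw [intervalIntegral.integral_sub ((hω.mono hsub).intervalIntegrable.const_mul H) hhω,
    intervalIntegral.integral_const_mul, weightedMean]
  field_simp

lemma weightedMean_le (hS : S.OrdConnected) (hh : ContinuousOn h S) (hω : ContinuousOn ω S)
    (hω0 : ∀ v ∈ S, 0 < ω v) (hw : w ∈ S) (hy : y ∈ S) (hwy : w < y)
    (hle : ∀ v ∈ Icc w y, h v ≤ H) : weightedMean ω h w y ≤ H := by
  rw [← sub_nonneg, sub_weightedMean hS hh hω hω0 hw hy hwy]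
  refine div_nonneg (intervalIntegral.integral_nonneg hwy.le fun v hv => ?_)
    (intervalIntegral_pos_of_forall_pos hS hω hω0 hw hy hwy).le
  exact mul_nonneg (sub_nonneg.2 (hle v hv)) (hω0 v (hS.out hw hy hv)).le

lemma le_weightedMean (hS : S.OrdConnected) (hh : ContinuousOn h S) (hω : ContinuousOn ω S)
    (hω0 : ∀ v ∈ S, 0 < ω v) (hw : w ∈ S) (hy : y ∈ S) (hwy : w < y) {L : ℝ}
    (hle : ∀ v ∈ Icc w y, L ≤ h v) : L ≤ weightedMean ω h w y := by
  have hsub := hS.uIcc_subset hw hy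
  rw [weightedMean, le_div_iff₀ (intervalIntegral_pos_of_forall_pos hS hω hω0 hw hy hwy),
    ← intervalIntegral.integral_const_mul]
  exact intervalIntegral.integral_mono_on hwy.le ((hω.mono hsub).intervalIntegrable.const_mul L)
    ((hh.mul hω).mono hsub).intervalIntegrable fun v hv =>
      mul_le_mul_of_nonneg_right (hle v hv) (hω0 v (hS.out hw hy hv)).le

lemma exists_lt_weightedMean (hSo : IsOpen S) (hS : S.OrdConnected) (hh : ContinuousOn h S)
    (hω : ContinuousOn ω S) (hω0 : ∀ v ∈ S, 0 < ω v) {y₀ l : ℝ} (hy₀ : y₀ ∈ S)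
    (hl : l < h y₀) : ∃ w y, (w ∈ S ∧ y ∈ S ∧ w < y) ∧ l < weightedMean ω h w y := by
  have hev : ∀ᶠ v in 𝓝 y₀, v ∈ S ∧ (l + h y₀) / 2 < h v :=
    Filter.Eventually.and (hSo.mem_nhds hy₀) <|
      (hh.continuousAt (hSo.mem_nhds hy₀)).eventually (eventually_gt_nhds (by linarith))
  obtain ⟨p, q, ⟨hp, hq⟩, hsub⟩ := mem_nhds_iff_exists_Ioo_subset.1 hev
  have hsub' : Icc ((p + y₀) / 2) ((y₀ + q) / 2) ⊆ Ioo p q :=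
    Icc_subset_Ioo (by linarith) (by linarith)
  have hw := (hsub (hsub' (left_mem_Icc.2 (by linarith)))).1
  have hy := (hsub (hsub' (right_mem_Icc.2 (by linarith)))).1
  have hwy : (p + y₀) / 2 < (y₀ + q) / 2 := by linarith
  refine ⟨_, _, ⟨hw, hy, hwy⟩, ?_⟩
  exact (by linarith : l < (l + h y₀) / 2).trans_le
    (le_weightedMean hS hh hω hω0 hw hy hwy fun v hv => (hsub (hsub' hv)).2.le)

lemma mul_intervalIntegral_le_of_forall_le (hS : S.OrdConnected) (hh : ContinuousOn h S)
    (hω : ContinuousOn ω S) (hω0 : ∀ v ∈ S, 0 < ω v) (hw : w ∈ S) (hy : y ∈ S) (hwy : w ≤ y)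
    (hgap : ∀ v ∈ Icc w y, h v ≤ H - δ) :
    δ * ∫ v in w..y, ω v ≤ ∫ v in w..y, (H - h v) * ω v := by
  have hsub := hS.uIcc_subset hw hy
  rw [← intervalIntegral.integral_const_mul]
  exact intervalIntegral.integral_mono_on hwy ((hω.mono hsub).intervalIntegrable.const_mul δ)
    (((continuousOn_const.sub hh).mul hω).mono hsub).intervalIntegrable fun v hv =>
      mul_le_mul_of_nonneg_right (by linarith [hgap v hv]) (hω0 v (hS.out hw hy hv)).le

/-- Outside `[p, q]` the integrand `(H - h) ω` dominates `δ ω`; inside it is only nonnegative,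
so at most the weight of `[p, q]` is lost. -/
lemma mul_sub_le_intervalIntegral (hS : S.OrdConnected) (hh : ContinuousOn h S)
    (hω : ContinuousOn ω S) (hω0 : ∀ v ∈ S, 0 < ω v) (hw : w ∈ S) (hy : y ∈ S) (hwy : w ≤ y)
    {p q : ℝ} (hp : p ∈ S) (hq : q ∈ S) (hpq : p ≤ q) (hδ : 0 ≤ δ)
    (hle : ∀ v ∈ S, h v ≤ H) (hgap : ∀ v ∈ S, v ∉ Icc p q → h v ≤ H - δ) :
    δ * ((∫ v in w..y, ω v) - ∫ v in p..q, ω v) ≤ ∫ v in w..y, (H - h v) * ω v := by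
  have hsub := hS.uIcc_subset hw hy
  set g := (Icc p q).indicator ω
  have hg : Integrable g :=
    (integrable_indicator_iff measurableSet_Icc).2 (hω.mono (hS.out hp hq)).integrableOn_Icc
  have hg0 : ∀ v, 0 ≤ g v := fun v => indicator_nonneg (fun v hv => (hω0 v (hS.out hp hq hv)).le) v
  have hgpq : ∫ v in w..y, g v ≤ ∫ v in p..q, ω v :=
    calc ∫ v in w..y, g v = ∫ v in Ioc w y, g v := intervalIntegral.integral_of_le hwy
      _ ≤ ∫ v, g v := setIntegral_le_integral hg (Eventually.of_forall hg0)
      _ = ∫ v in p..q, ω v := by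
        rw [integral_indicator measurableSet_Icc, integral_Icc_eq_integral_Ioc,
          intervalIntegral.integral_of_le hpq]
  have hpt : ∀ v ∈ Icc w y, δ * ω v - δ * g v ≤ (H - h v) * ω v := by
    intro v hv
    have hvS := hS.out hw hy hv
    by_cases hvpq : v ∈ Icc p q
    · rw [show g v = ω v from indicator_of_mem hvpq ω, sub_self]
      exact mul_nonneg (sub_nonneg.2 (hle v hvS)) (hω0 v hvS).le
    · rw [show g v = 0 from indicator_of_notMem hvpq ω, mul_zero, sub_zero]
      exact mul_le_mul_of_nonneg_right (by linarith [hgap v hvS hvpq]) (hω0 v hvS).le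
  have hωi := (hω.mono hsub).intervalIntegrable (μ := volume)
  calc δ * ((∫ v in w..y, ω v) - ∫ v in p..q, ω v)
      ≤ δ * ((∫ v in w..y, ω v) - ∫ v in w..y, g v) := by gcongr
    _ = ∫ v in w..y, (δ * ω v - δ * g v) := by
      rw [intervalIntegral.integral_sub (hωi.const_mul δ) (hg.intervalIntegrable.const_mul δ),
        intervalIntegral.integral_const_mul, intervalIntegral.integral_const_mul, mul_sub]
    _ ≤ ∫ v in w..y, (H - h v) * ω v :=
      intervalIntegral.integral_mono_on hwy
        ((hωi.const_mul δ).sub (hg.intervalIntegrable.const_mul δ))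
        (((continuousOn_const.sub hh).mul hω).mono hsub).intervalIntegrable hpt

/-- If `[w, y]` is not inside `(y₀ - ε, y₀ + ε)`, then it either avoids `(y₀ - ε/2, y₀ + ε/2)`
or contains one of the two collars `[y₀ - ε, y₀ - ε/2]`, `[y₀ + ε/2, y₀ + ε]`, on which
`H - h ≥ δ`. -/
lemma mul_min_le_intervalIntegral_of_far (hS : S.OrdConnected) (hh : ContinuousOn h S)
    (hω : ContinuousOn ω S) (hω0 : ∀ v ∈ S, 0 < ω v) {y₀ ε : ℝ} (hε : 0 < ε) (hδ : 0 ≤ δ)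
    (hball : Icc (y₀ - ε) (y₀ + ε) ⊆ S) (hle : ∀ v ∈ S, h v ≤ H)
    (hgap : ∀ v ∈ S, v ∉ Ioo (y₀ - ε / 2) (y₀ + ε / 2) → h v ≤ H - δ)
    (hw : w ∈ S) (hy : y ∈ S) (hwy : w < y)
    (hfar : w ∉ Ioo (y₀ - ε) (y₀ + ε) ∨ y ∉ Ioo (y₀ - ε) (y₀ + ε)) :
    δ * min (∫ v in w..y, ω v) (min (∫ v in (y₀ - ε)..(y₀ - ε / 2), ω v)
      (∫ v in (y₀ + ε / 2)..(y₀ + ε), ω v)) ≤ ∫ v in w..y, (H - h v) * ω v := by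
  have hmem : ∀ {v}, y₀ - ε ≤ v → v ≤ y₀ + ε → v ∈ S := fun h1 h2 => hball ⟨h1, h2⟩
  have hpiece : ∀ u v, w ≤ u → u ≤ v → v ≤ y →
      ∫ t in u..v, (H - h t) * ω t ≤ ∫ t in w..y, (H - h t) * ω t := by
    intro u v hwu huv hvy
    refine intervalIntegral.integral_mono_interval hwu huv hvy ?_
      (((continuousOn_const.sub hh).mul hω).mono (hS.uIcc_subset hw hy)).intervalIntegrable
    filter_upwards [ae_restrict_mem measurableSet_Ioc] with t ht
    have htS := hS.out hw hy (Ioc_subset_Icc_self ht)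
    exact mul_nonneg (sub_nonneg.2 (hle t htS)) (hω0 t htS).le
  have hcollar : ∀ u v, u ∈ S → v ∈ S → u ≤ v → w ≤ u → v ≤ y →
      (∀ t ∈ Icc u v, t ∉ Ioo (y₀ - ε / 2) (y₀ + ε / 2)) →
      δ * ∫ t in u..v, ω t ≤ ∫ t in w..y, (H - h t) * ω t :=
    fun u v hu hv huv hwu hvy hout =>
      (mul_intervalIntegral_le_of_forall_le hS hh hω hω0 hu hv huv fun t ht =>
        hgap t (hS.out hu hv ht) (hout t ht)).trans (hpiece u v hwu huv hvy)
  by_cases hsep : y ≤ y₀ - ε / 2 ∨ y₀ + ε / 2 ≤ w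
  · refine le_trans ?_ (hcollar w y hw hy hwy.le le_rfl le_rfl fun t ht hin => ?_)
    · exact mul_le_mul_of_nonneg_left (min_le_left _ _) hδ
    · rcases hsep with h1 | h1 <;> linarith [ht.1, ht.2, hin.1, hin.2]
  rw [not_or, not_le, not_le] at hsep
  have hcase : w ≤ y₀ - ε ∨ y₀ + ε ≤ y := by
    by_contra! hc
    rcases hfar with h1 | h1 <;> exact h1 ⟨by linarith, by linarith⟩
  rcases hcase with h1 | h1
  · refine le_trans ?_ (hcollar (y₀ - ε) (y₀ - ε / 2) (hmem le_rfl (by linarith))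
      (hmem (by linarith) (by linarith)) (by linarith) h1 hsep.1.le fun t ht hin => ?_)
    · exact mul_le_mul_of_nonneg_left ((min_le_right _ _).trans (min_le_left _ _)) hδ
    · linarith [ht.2, hin.1]
  · refine le_trans ?_ (hcollar (y₀ + ε / 2) (y₀ + ε) (hmem (by linarith) (by linarith))
      (hmem (by linarith) le_rfl) (by linarith) hsep.2.le h1 fun t ht hin => ?_)
    · exact mul_le_mul_of_nonneg_left ((min_le_right _ _).trans (min_le_right _ _)) hδ
    · linarith [ht.1, hin.2]

lemma exists_weightedMean_le_sub_of_far_of_subset (hS : S.OrdConnected) (hh : ContinuousOn h S)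
    (hω : ContinuousOn ω S) (hω0 : ∀ v ∈ S, 0 < ω v) {y₀ ε : ℝ} (hε : 0 < ε) (hδ : 0 < δ)
    (hball : Icc (y₀ - ε) (y₀ + ε) ⊆ S) (hle : ∀ v ∈ S, h v ≤ H)
    (hgap : ∀ v ∈ S, v ∉ Ioo (y₀ - ε / 2) (y₀ + ε / 2) → h v ≤ H - δ) :
    ∃ ρ > 0, ∀ w ∈ S, ∀ y ∈ S, w < y →
      (w ∉ Ioo (y₀ - ε) (y₀ + ε) ∨ y ∉ Ioo (y₀ - ε) (y₀ + ε)) →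
      weightedMean ω h w y ≤ H - ρ := by
  have hmem : ∀ {v}, y₀ - ε ≤ v → v ≤ y₀ + ε → v ∈ S := fun h1 h2 => hball ⟨h1, h2⟩
  have hpos : ∀ u v, y₀ - ε ≤ u → u < v → v ≤ y₀ + ε → 0 < ∫ t in u..v, ω t :=
    fun u v hu huv hv => intervalIntegral_pos_of_forall_pos hS hω hω0 (hmem hu (by linarith))
      (hmem (by linarith) hv) huv
  set mb := ∫ t in (y₀ - ε / 2)..(y₀ + ε / 2), ω t
  set m₀ := min (∫ t in (y₀ - ε)..(y₀ - ε / 2), ω t) (∫ t in (y₀ + ε / 2)..(y₀ + ε), ω t)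
  have hmb : 0 < mb := hpos _ _ (by linarith) (by linarith) (by linarith)
  have hm₀ : 0 < m₀ := lt_min (hpos _ _ le_rfl (by linarith) (by linarith))
    (hpos _ _ (by linarith) (by linarith) le_rfl)
  set r := min (1 / 2) (m₀ / (2 * mb))
  have hr0 : 0 < r := by positivity
  have hr1 : r ≤ 1 / 2 := min_le_left _ _
  have hr2 : r * (2 * mb) ≤ m₀ := (le_div_iff₀ (by positivity)).1 (min_le_right _ _)
  refine ⟨δ * r, by positivity, fun w hw y hy hwy hfar => ?_⟩
  have hν := intervalIntegral_pos_of_forall_pos hS hω hω0 hw hy hwy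
  have hcore := mul_sub_le_intervalIntegral hS hh hω hω0 hw hy hwy.le
    (hmem (by linarith) (by linarith)) (hmem (by linarith) (by linarith)) (by linarith) hδ.le
    hle fun v hv hvI => hgap v hv fun hin => hvI (Ioo_subset_Icc_self hin)
  have hcollar := mul_min_le_intervalIntegral_of_far hS hh hω hω0 hε hδ.le hball hle hgap
    hw hy hwy hfar
  rw [le_sub_comm, sub_weightedMean hS hh hω hω0 hw hy hwy, le_div_iff₀ hν, mul_assoc]
  rcases le_or_gt (2 * mb) (∫ v in w..y, ω v) with hbig | hsmall
  · exact (mul_le_mul_of_nonneg_left (by nlinarith) hδ.le).trans hcore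
  · exact (mul_le_mul_of_nonneg_left (le_min (by nlinarith) (by nlinarith)) hδ.le).trans hcollar

lemma forall_le_of_forall_ne_lt {f : ℝ → ℝ} {y : ℝ}
    (h : ∀ x ∈ S, x ≠ y → f x < f y) : ∀ x ∈ S, f x ≤ f y := fun x hx =>
  (eq_or_ne x y).elim (fun hxy => hxy ▸ le_rfl) fun hxy => (h x hx hxy).le

lemma exists_forall_le_sub_of_forall_lt (hS : S.OrdConnected) (hh : ContinuousOn h S) {y₀ : ℝ}
    (hmax : ∀ x ∈ S, x ≠ y₀ → h x < h y₀) {ta tb β : ℝ} (hta : ta ∈ S) (htb : tb ∈ S)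
    (hβ : β < h y₀) (hleft : ∀ x ∈ S, x < ta → h x ≤ β) (hright : ∀ x ∈ S, tb < x → h x ≤ β)
    {ε : ℝ} (hε : 0 < ε) : ∃ δ > 0, ∀ x ∈ S, x ∉ Ioo (y₀ - ε) (y₀ + ε) → h x ≤ h y₀ - δ := by
  set C := Icc ta tb \ Ioo (y₀ - ε) (y₀ + ε)
  have hCS : C ⊆ S := fun x hx => hS.out hta htb hx.1
  obtain ⟨β', hβ', hC⟩ : ∃ β' < h y₀, ∀ x ∈ C, h x ≤ β' := by
    rcases C.eq_empty_or_nonempty with hC | hC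
    · exact ⟨β, hβ, by simp [hC]⟩
    obtain ⟨z, hz, hzmax⟩ :=
      (isCompact_Icc.diff isOpen_Ioo).exists_isMaxOn hC (hh.mono hCS)
    refine ⟨h z, hmax z (hCS hz) fun hzy => hz.2 ?_, fun x hx => hzmax hx⟩
    exact hzy ▸ ⟨by linarith, by linarith⟩
  refine ⟨h y₀ - max β β', by simp [hβ, hβ'], fun x hx hxout => ?_⟩
  rw [sub_sub_cancel]
  rcases lt_or_ge x ta with h1 | h1
  · exact (hleft x hx h1).trans (le_max_left _ _)
  rcases lt_or_ge tb x with h2 | h2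
  · exact (hright x hx h2).trans (le_max_left _ _)
  exact (hC x ⟨⟨h1, h2⟩, hxout⟩).trans (le_max_right _ _)

lemma exists_weightedMean_le_sub_of_far (hSo : IsOpen S) (hS : S.OrdConnected)
    (hh : ContinuousOn h S) (hω : ContinuousOn ω S) (hω0 : ∀ v ∈ S, 0 < ω v) {y₀ : ℝ}
    (hy₀ : y₀ ∈ S) (hle : ∀ v ∈ S, h v ≤ h y₀)
    (hgap : ∀ ε > 0, ∃ δ > 0, ∀ v ∈ S, v ∉ Ioo (y₀ - ε) (y₀ + ε) → h v ≤ h y₀ - δ)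
    {ε : ℝ} (hε : 0 < ε) :
    ∃ ρ > 0, ∀ w y, w ∈ S ∧ y ∈ S ∧ w < y →
      (w ∉ Ioo (y₀ - ε) (y₀ + ε) ∨ y ∉ Ioo (y₀ - ε) (y₀ + ε)) →
      weightedMean ω h w y ≤ h y₀ - ρ := by
  obtain ⟨r, hr, hrS⟩ := Metric.isOpen_iff.1 hSo y₀ hy₀
  set ε' := min ε (r / 2)
  have hε' : 0 < ε' := lt_min hε (half_pos hr)
  have hball : Icc (y₀ - ε') (y₀ + ε') ⊆ S := fun v hv => hrS <| by
    rw [Metric.mem_ball, Real.dist_eq, abs_lt]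
    constructor <;> linarith [hv.1, hv.2, min_le_right ε (r / 2)]
  obtain ⟨δ, hδ, hδgap⟩ := hgap (ε' / 2) (half_pos hε')
  obtain ⟨ρ, hρ, hρfar⟩ :=
    exists_weightedMean_le_sub_of_far_of_subset hS hh hω hω0 hε' hδ hball hle hδgap
  have hsub : Ioo (y₀ - ε') (y₀ + ε') ⊆ Ioo (y₀ - ε) (y₀ + ε) :=
    Ioo_subset_Ioo (by linarith [min_le_left ε (r / 2)]) (by linarith [min_le_left ε (r / 2)])
  exact ⟨ρ, hρ, fun w y ⟨hw, hy, hwy⟩ hfar =>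
    hρfar w hw y hy hwy (hfar.imp (fun h1 h2 => h1 (hsub h2)) fun h1 h2 => h1 (hsub h2))⟩

end WeightedMean

section PenalizedMax

variable {P : ℝ → ℝ → Prop} {F : ℝ → ℝ → ℝ → ℝ} {A D : ℝ → ℝ → ℝ} {K₀ H : ℝ}
  {wst yst : ℝ → ℝ}

lemma optimalValue_strictAnti (hF : ∀ K w y, P w y → F K w y = A w y - K / D w y)
    (hD : ∀ w y, P w y → 0 < D w y)
    (hopt : ∀ K, 0 < K → K ≤ K₀ →
      P (wst K) (yst K) ∧ ∀ w y, P w y → F K w y ≤ F K (wst K) (yst K))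
    {K₁ K₂ : ℝ} (hK₁ : 0 < K₁) (hK₁₂ : K₁ < K₂) (hK₂ : K₂ ≤ K₀) :
    F K₂ (wst K₂) (yst K₂) < F K₁ (wst K₁) (yst K₁) := by
  have hP := (hopt K₂ (hK₁.trans hK₁₂) hK₂).1
  calc F K₂ (wst K₂) (yst K₂) < F K₁ (wst K₂) (yst K₂) := by
        rw [hF _ _ _ hP, hF _ _ _ hP]
        gcongr
        exact hD _ _ hP
    _ ≤ F K₁ (wst K₁) (yst K₁) := (hopt K₁ hK₁ (hK₁₂.le.trans hK₂)).2 _ _ hP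

lemma optimalValue_lt (hF : ∀ K w y, P w y → F K w y = A w y - K / D w y)
    (hD : ∀ w y, P w y → 0 < D w y) (hA : ∀ w y, P w y → A w y ≤ H)
    (hopt : ∀ K, 0 < K → K ≤ K₀ → P (wst K) (yst K)) {K : ℝ} (hK : 0 < K) (hKK₀ : K ≤ K₀) :
    F K (wst K) (yst K) < H := by
  have hP := hopt K hK hKK₀
  rw [hF _ _ _ hP]
  linarith [hA _ _ hP, div_pos hK (hD _ _ hP)]

lemma tendsto_optimalValue (hF : ∀ K w y, P w y → F K w y = A w y - K / D w y)
    (hD : ∀ w y, P w y → 0 < D w y) (hA : ∀ w y, P w y → A w y ≤ H)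
    (happrox : ∀ l < H, ∃ w y, P w y ∧ l < A w y) (hK₀ : 0 < K₀)
    (hopt : ∀ K, 0 < K → K ≤ K₀ →
      P (wst K) (yst K) ∧ ∀ w y, P w y → F K w y ≤ F K (wst K) (yst K)) :
    Tendsto (fun K => F K (wst K) (yst K)) (𝓝[>] 0) (𝓝 H) := by
  have hsmall : ∀ᶠ K in 𝓝[>] (0 : ℝ), 0 < K ∧ K ≤ K₀ := by
    filter_upwards [Ioc_mem_nhdsGT hK₀] with K hK using hK
  refine tendsto_order.2 ⟨fun l hl => ?_, fun u hu => ?_⟩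
  · obtain ⟨w, y, hP, hlA⟩ := happrox l hl
    have hDwy := hD w y hP
    filter_upwards [hsmall, Ioo_mem_nhdsGT (mul_pos (sub_pos.2 hlA) hDwy)] with K hK hK'
    calc l < A w y - K / D w y := by
          rw [lt_sub_comm, div_lt_iff₀ hDwy]; exact hK'.2
      _ = F K w y := (hF K w y hP).symm
      _ ≤ F K (wst K) (yst K) := (hopt K hK.1 hK.2).2 w y hP
  · filter_upwards [hsmall] with K hK
    exact (optimalValue_lt hF hD hA (fun K h1 h2 => (hopt K h1 h2).1) hK.1 hK.2).trans hu

lemma tendsto_optimizers (hF : ∀ K w y, P w y → F K w y = A w y - K / D w y)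
    (hD : ∀ w y, P w y → 0 < D w y) (hA : ∀ w y, P w y → A w y ≤ H)
    (happrox : ∀ l < H, ∃ w y, P w y ∧ l < A w y) (hK₀ : 0 < K₀)
    (hopt : ∀ K, 0 < K → K ≤ K₀ →
      P (wst K) (yst K) ∧ ∀ w y, P w y → F K w y ≤ F K (wst K) (yst K))
    {y₀ : ℝ} (hfar : ∀ ε > 0, ∃ ρ > 0, ∀ w y, P w y →
      (w ∉ Ioo (y₀ - ε) (y₀ + ε) ∨ y ∉ Ioo (y₀ - ε) (y₀ + ε)) → A w y ≤ H - ρ) :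
    Tendsto wst (𝓝[>] 0) (𝓝 y₀) ∧ Tendsto yst (𝓝[>] 0) (𝓝 y₀) := by
  have hnear : ∀ ε > 0, ∀ᶠ K in 𝓝[>] (0 : ℝ),
      wst K ∈ Ioo (y₀ - ε) (y₀ + ε) ∧ yst K ∈ Ioo (y₀ - ε) (y₀ + ε) := by
    intro ε hε
    obtain ⟨ρ, hρ, hρfar⟩ := hfar ε hε
    filter_upwards [(tendsto_optimalValue hF hD hA happrox hK₀ hopt).eventually
        (eventually_gt_nhds (sub_lt_self H hρ)), Ioc_mem_nhdsGT hK₀] with K hval hK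
    have hP := (hopt K hK.1 hK.2).1
    by_contra hout
    have := hρfar _ _ hP (not_and_or.1 hout)
    rw [hF _ _ _ hP] at hval
    linarith [div_pos hK.1 (hD _ _ hP)]
  simp only [← Real.ball_eq_Ioo, Metric.mem_ball] at hnear
  exact ⟨Metric.tendsto_nhds.2 fun ε hε => (hnear ε hε).mono fun _ hK => hK.1,
    Metric.tendsto_nhds.2 fun ε hε => (hnear ε hε).mono fun _ hK => hK.2⟩

end PenalizedMax

lemma sDen_pos (μ σ : ℝ → ℝ) (x₀ x : ℝ) : 0 < sDen μ σ x₀ x := Real.exp_pos _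

lemma inv_sDen (μ σ : ℝ → ℝ) (x₀ x : ℝ) :
    (sDen μ σ x₀ x)⁻¹ = Real.exp (∫ y in x₀..x, 2 * μ y / σ y ^ 2) := by
  rw [sDen, Real.exp_neg, inv_inv]

structure Setting (a : ℝ) (b : EReal) (μ σ : ℝ → ℝ) (x₀ μa : ℝ) : Prop where
  lt : (a : EReal) < b
  mem_x₀ : x₀ ∈ stInt a b
  continuousOn_μ : ContinuousOn μ (stInt a b)
  continuousOn_σ : ContinuousOn σ (stInt a b)
  sq_σ_pos : ∀ x ∈ stInt a b, 0 < σ x ^ 2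
  integrableOn_mDen : ∀ x ∈ stInt a b, IntegrableOn (mDen μ σ x₀) (Ioo a x)
  tendsto_sDen : Tendsto (sDen μ σ x₀) (𝓝[>] a) atTop
  tendsto_μ : Tendsto μ (𝓝[>] a) (𝓝 μa)

namespace Setting

variable {a : ℝ} {b : EReal} {μ σ c : ℝ → ℝ} {x₀ μa ca cb p γ : ℝ} (H : Setting a b μ σ x₀ μa)
include H

lemma isOpen : IsOpen (stInt a b) := isOpen_stInt H.lt

lemma ordConnected : (stInt a b).OrdConnected := ordConnected_stInt H.lt

lemma hasDerivAt_inv_sDen {x : ℝ} (hx : x ∈ stInt a b) :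
    HasDerivAt (fun t => (sDen μ σ x₀ t)⁻¹) (μ x * mDen μ σ x₀ x) x := by
  have hdrift : ContinuousOn (fun y => 2 * μ y / σ y ^ 2) (stInt a b) :=
    (continuousOn_const.mul H.continuousOn_μ).div (H.continuousOn_σ.pow 2)
      fun y hy => (H.sq_σ_pos y hy).ne'
  have hI := intervalIntegral.integral_hasDerivAt_right
    (hdrift.mono (H.ordConnected.uIcc_subset H.mem_x₀ hx)).intervalIntegrable
    (hdrift.stronglyMeasurableAtFilter H.isOpen x hx)
    (hdrift.continuousAt (H.isOpen.mem_nhds hx))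
  simp_rw [inv_sDen]
  convert hI.exp using 1
  rw [mDen, ← inv_sDen]
  have := H.sq_σ_pos x hx
  have := sDen_pos μ σ x₀ x
  field_simp

lemma continuousOn_sDen : ContinuousOn (sDen μ σ x₀) (stInt a b) := fun x hx => by
  have h : ContinuousAt (fun t => ((sDen μ σ x₀ t)⁻¹)⁻¹) x :=
    (H.hasDerivAt_inv_sDen hx).continuousAt.inv₀ (inv_ne_zero (sDen_pos μ σ x₀ x).ne')
  simp only [inv_inv] at h
  exact h.continuousWithinAt

lemma mDen_pos {x : ℝ} (hx : x ∈ stInt a b) : 0 < mDen μ σ x₀ x :=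
  div_pos two_pos (mul_pos (H.sq_σ_pos x hx) (sDen_pos μ σ x₀ x))

lemma continuousOn_mDen : ContinuousOn (mDen μ σ x₀) (stInt a b) :=
  continuousOn_const.div ((H.continuousOn_σ.pow 2).mul H.continuousOn_sDen)
    fun x hx => (mul_pos (H.sq_σ_pos x hx) (sDen_pos μ σ x₀ x)).ne'

lemma integrableOn_mul_mDen {φ : ℝ → ℝ} {L : ℝ} (hφ : ContinuousOn φ (stInt a b))
    (hlim : Tendsto φ (𝓝[>] a) (𝓝 L)) {x : ℝ} (hx : x ∈ stInt a b) :
    IntegrableOn (fun u => φ u * mDen μ σ x₀ u) (Ioo a x) :=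
  integrableOn_Ioo_mul_of_tendsto (hφ.mono (Ioc_subset_stInt hx))
    (H.continuousOn_mDen.mono (Ioc_subset_stInt hx)) (H.integrableOn_mDen x hx) hlim

/-- The drift term integrates in closed form because `μ m = (1/s)'`, and `1/s → 0` at `a`. -/
lemma integral_μ_mul_mDen {x : ℝ} (hx : x ∈ stInt a b) :
    ∫ u in Ioo a x, μ u * mDen μ σ x₀ u = (sDen μ σ x₀ x)⁻¹ :=
  setIntegral_Ioo_eq_of_hasDerivAt hx.1
    (fun _ ht => H.hasDerivAt_inv_sDen (Ioc_subset_stInt hx ht))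
    (H.integrableOn_mul_mDen H.continuousOn_μ H.tendsto_μ hx) H.tendsto_sDen.inv_tendsto_atTop

lemma Mab_pos {x : ℝ} (hx : x ∈ stInt a b) : 0 < Mab μ σ x₀ a x :=
  setIntegral_Ioo_pos hx.1 (H.integrableOn_mDen x hx)
    fun _ hu => H.mDen_pos (Ioc_subset_stInt hx (Ioo_subset_Ioc_self hu))

lemma continuousOn_setIntegral_mul_mDen {φ : ℝ → ℝ} {L : ℝ} (hφ : ContinuousOn φ (stInt a b))
    (hlim : Tendsto φ (𝓝[>] a) (𝓝 L)) :
    ContinuousOn (fun x => ∫ u in Ioo a x, φ u * mDen μ σ x₀ u) (stInt a b) :=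
  continuousOn_setIntegral_Ioo H.isOpen (fun _ hx => hx.1) (hφ.mul H.continuousOn_mDen)
    fun _ hx => H.integrableOn_mul_mDen hφ hlim hx

lemma continuousOn_Mab : ContinuousOn (Mab μ σ x₀ a) (stInt a b) := by
  show ContinuousOn (fun x => ∫ u in Ioo a x, mDen μ σ x₀ u) _
  simpa using H.continuousOn_setIntegral_mul_mDen continuousOn_const
    (tendsto_const_nhds (x := (1 : ℝ)))

lemma continuousOn_Mab_mul_sDen :
    ContinuousOn (fun v => Mab μ σ x₀ a v * sDen μ σ x₀ v) (stInt a b) :=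
  H.continuousOn_Mab.mul H.continuousOn_sDen

lemma Mab_mul_sDen_pos {v : ℝ} (hv : v ∈ stInt a b) : 0 < Mab μ σ x₀ a v * sDen μ σ x₀ v :=
  mul_pos (H.Mab_pos hv) (sDen_pos μ σ x₀ v)

lemma xiF_sub_xiF {w y : ℝ} (hw : w ∈ stInt a b) (hy : y ∈ stInt a b) :
    xiF μ σ x₀ a y - xiF μ σ x₀ a w = ∫ v in w..y, Mab μ σ x₀ a v * sDen μ σ x₀ v :=
  intervalIntegral.integral_interval_sub_left
    (H.continuousOn_Mab_mul_sDen.mono (H.ordConnected.uIcc_subset H.mem_x₀ hy)).intervalIntegrable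
    (H.continuousOn_Mab_mul_sDen.mono (H.ordConnected.uIcc_subset H.mem_x₀ hw)).intervalIntegrable

lemma xiF_sub_pos {w y : ℝ} (hw : w ∈ stInt a b) (hy : y ∈ stInt a b) (hwy : w < y) :
    0 < xiF μ σ x₀ a y - xiF μ σ x₀ a w := by
  rw [H.xiF_sub_xiF hw hy]
  exact intervalIntegral_pos_of_forall_pos H.ordConnected H.continuousOn_Mab_mul_sDen
    (fun _ => H.Mab_mul_sDen_pos) hw hy hwy

lemma hF_mul_Mab (hc : ContinuousOn c (stInt a b)) (hca : Tendsto c (𝓝[>] a) (𝓝 ca))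
    {x : ℝ} (hx : x ∈ stInt a b) :
    hF μ σ c x₀ a p γ x * Mab μ σ x₀ a x
      = γ * (∫ u in Ioo a x, c u * mDen μ σ x₀ u) + p * (sDen μ σ x₀ x)⁻¹ := by
  rw [hF, div_mul_cancel₀ _ (H.Mab_pos hx).ne', ← H.integral_μ_mul_mDen hx,
    ← integral_const_mul, ← integral_const_mul, ← integral_add
      ((H.integrableOn_mul_mDen hc hca hx).const_mul γ)
      ((H.integrableOn_mul_mDen H.continuousOn_μ H.tendsto_μ hx).const_mul p)]
  congr 1 with u
  ring

lemma continuousOn_hF (hc : ContinuousOn c (stInt a b)) (hca : Tendsto c (𝓝[>] a) (𝓝 ca)) :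
    ContinuousOn (hF μ σ c x₀ a p γ) (stInt a b) := by
  refine ContinuousOn.congr (f := fun x => (γ * (∫ u in Ioo a x, c u * mDen μ σ x₀ u)
      + p * (sDen μ σ x₀ x)⁻¹) / Mab μ σ x₀ a x) ?_ fun x hx => ?_
  · exact ((continuousOn_const.mul (H.continuousOn_setIntegral_mul_mDen hc hca)).add
      (continuousOn_const.mul (H.continuousOn_sDen.inv₀ fun x _ => (sDen_pos μ σ x₀ x).ne'))).div
      H.continuousOn_Mab fun x hx => (H.Mab_pos hx).ne'
  · dsimp only
    rw [eq_div_iff (H.Mab_pos hx).ne', H.hF_mul_Mab hc hca hx]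

lemma FF_eq (hc : ContinuousOn c (stInt a b)) (hca : Tendsto c (𝓝[>] a) (𝓝 ca))
    {w y : ℝ} (hw : w ∈ stInt a b) (hy : y ∈ stInt a b) (K : ℝ) :
    FF μ σ c x₀ a p K γ w y
      = weightedMean (fun v => Mab μ σ x₀ a v * sDen μ σ x₀ v) (hF μ σ c x₀ a p γ) w y
        - K / (xiF μ σ x₀ a y - xiF μ σ x₀ a w) := by
  have hcont : ContinuousOn (fun v => (∫ u in Ioo a v, c u * mDen μ σ x₀ u) * sDen μ σ x₀ v)
      (stInt a b) := (H.continuousOn_setIntegral_mul_mDen hc hca).mul H.continuousOn_sDen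
  have hint : ∀ {u}, u ∈ stInt a b → IntervalIntegrable
      (fun v => (∫ u in Ioo a v, c u * mDen μ σ x₀ u) * sDen μ σ x₀ v) volume x₀ u :=
    fun hu => (hcont.mono (H.ordConnected.uIcc_subset H.mem_x₀ hu)).intervalIntegrable
  have hg : gF μ σ c x₀ a y - gF μ σ c x₀ a w
      = ∫ v in w..y, (∫ u in Ioo a v, c u * mDen μ σ x₀ u) * sDen μ σ x₀ v :=
    intervalIntegral.integral_interval_sub_left (hint hy) (hint hw)
  have hnum : ∫ v in w..y, hF μ σ c x₀ a p γ v * (Mab μ σ x₀ a v * sDen μ σ x₀ v)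
      = p * (y - w) + γ * (gF μ σ c x₀ a y - gF μ σ c x₀ a w) := by
    have hpt : EqOn (fun v => hF μ σ c x₀ a p γ v * (Mab μ σ x₀ a v * sDen μ σ x₀ v))
        (fun v => p + γ * ((∫ u in Ioo a v, c u * mDen μ σ x₀ u) * sDen μ σ x₀ v)) (uIcc w y) := by
      intro v hv
      dsimp only
      rw [← mul_assoc, H.hF_mul_Mab hc hca (H.ordConnected.uIcc_subset hw hy hv)]
      field_simp [(sDen_pos μ σ x₀ v).ne']
      ring
    rw [intervalIntegral.integral_congr hpt, intervalIntegral.integral_add intervalIntegrable_const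
      (((hint hw).symm.trans (hint hy)).const_mul γ), intervalIntegral.integral_const,
      intervalIntegral.integral_const_mul, smul_eq_mul, hg]
    ring
  rw [FF, weightedMean, ← H.xiF_sub_xiF hw hy, hnum, ← sub_div]
  ring_nf

/-- Near `a`, `h` is an `m`-average of the strictly increasing `γ c + p μ`. -/
lemma hF_mem_Ioc (hc : ContinuousOn c (stInt a b)) (hca : Tendsto c (𝓝[>] a) (𝓝 ca))
    (hcmono : MonotoneOn c (stInt a b)) (hγ : 0 ≤ γ) (hp : 0 < p) {xhat : ℝ}
    (hxhat : xhat ∈ stInt a b) (hμmono : StrictMonoOn μ (Ioo a xhat)) {x : ℝ}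
    (hx : x ∈ Ioo a xhat) :
    hF μ σ c x₀ a p γ x ∈ Ioc (γ * ca + p * μa) (γ * c x + p * μ x) := by
  have hIoo : Ioo a xhat ⊆ stInt a b := Ioo_subset_Ioc_self.trans (Ioc_subset_stInt hxhat)
  have hGmono : StrictMonoOn (fun u => γ * c u + p * μ u) (Ioo a xhat) := fun u hu v hv huv =>
    add_lt_add_of_le_of_lt (mul_le_mul_of_nonneg_left (hcmono (hIoo hu) (hIoo hv) huv.le) hγ)
      (mul_lt_mul_of_pos_left (hμmono hu hv huv) hp)
  have hGlim := (hca.const_mul γ).add (H.tendsto_μ.const_mul p)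
  have hxS := hIoo hx
  have hGi : IntegrableOn (fun u => (γ * c u + p * μ u) * mDen μ σ x₀ u) (Ioo a x) :=
    H.integrableOn_mul_mDen ((hc.const_mul γ).add (H.continuousOn_μ.const_mul p)) hGlim hxS
  have hmi := H.integrableOn_mDen x hxS
  have hm : ∀ u ∈ Ioo a x, 0 < mDen μ σ x₀ u := fun u hu =>
    H.mDen_pos (hIoo ⟨hu.1, hu.2.trans hx.2⟩)
  rw [mem_Ioc, hF, lt_div_iff₀ (H.Mab_pos hxS), div_le_iff₀ (H.Mab_pos hxS), Mab, ← integral_const_mul,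
    ← integral_const_mul, ← sub_pos, ← integral_sub hGi (hmi.const_mul _)]
  constructor
  · refine setIntegral_Ioo_pos hx.1 (hGi.sub (hmi.const_mul _)) fun u hu => ?_
    rw [← sub_mul]
    exact mul_pos (sub_pos.2 (StrictMonoOn.lt_of_tendsto_nhdsGT hGmono hGlim
      ⟨hu.1, hu.2.trans hx.2⟩)) (hm u hu)
  · exact setIntegral_mono_on hGi (hmi.const_mul _) measurableSet_Ioo fun u hu =>
      mul_le_mul_of_nonneg_right (hGmono.monotoneOn ⟨hu.1, hu.2.trans hx.2⟩ hx hu.2.le)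
        (hm u hu).le

lemma exists_forall_hF_le_left (hc : ContinuousOn c (stInt a b))
    (hca : Tendsto c (𝓝[>] a) (𝓝 ca)) (hcmono : MonotoneOn c (stInt a b)) (hγ : 0 ≤ γ)
    (hp : 0 < p) {xhat : ℝ} (hxhat : xhat ∈ stInt a b) (hμmono : StrictMonoOn μ (Ioo a xhat))
    {α : ℝ} (hle : ∀ x ∈ stInt a b, hF μ σ c x₀ a p γ x ≤ α) :
    ∃ ta ∈ stInt a b, ∃ β < α, ∀ x ∈ stInt a b, x < ta → hF μ σ c x₀ a p γ x ≤ β := by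
  obtain ⟨x₁, hx₁⟩ := exists_between hxhat.1
  have hlt := (H.hF_mem_Ioc hc hca hcmono hγ hp hxhat hμmono hx₁).1.trans_le
    (hle x₁ (Ioc_subset_stInt hxhat ⟨hx₁.1, hx₁.2.le⟩))
  have hev : ∀ᶠ x in 𝓝[>] a, γ * c x + p * μ x < (γ * ca + p * μa + α) / 2 ∧ x < xhat :=
    (((hca.const_mul γ).add (H.tendsto_μ.const_mul p)).eventually
      (eventually_lt_nhds (by linarith))).and
      (mem_of_superset (Ioo_mem_nhdsGT hxhat.1) fun _ hx => hx.2)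
  obtain ⟨ta, hta, hev⟩ := (nhdsGT_hasBasis_stInt H.lt).eventually_iff.1 hev
  refine ⟨ta, hta, (γ * ca + p * μa + α) / 2, by linarith, fun x hx hxta => ?_⟩
  have hxa := hev ⟨hx.1, hxta⟩
  exact (H.hF_mem_Ioc hc hca hcmono hγ hp hxhat hμmono ⟨hx.1, hxa.2⟩).2.trans hxa.1.le

/-- The `m`-average of the increasing `c` over `(a, x)` is at most `c̄(b)`: when `M[a,b] < ∞` by
Chebyshev's inequality, and otherwise because `c ≤ c(b)`. -/
lemma integral_mul_mDen_le_cbar (hc : ContinuousOn c (stInt a b))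
    (hca : Tendsto c (𝓝[>] a) (𝓝 ca)) (hcnn : ∀ x ∈ stInt a b, 0 ≤ c x)
    (hcmono : MonotoneOn c (stInt a b)) (hcb : Tendsto c (atB b) (𝓝 cb)) {x : ℝ}
    (hx : x ∈ stInt a b) :
    ∫ u in Ioo a x, c u * mDen μ σ x₀ u ≤ cbar μ σ c x₀ a b cb * Mab μ σ x₀ a x := by
  have hccb : ∀ u ∈ stInt a b, c u ≤ cb := fun _ hu =>
    MonotoneOn.le_of_tendsto_atB H.lt hcmono hcb hu
  have hA : Ioo a x ⊆ stInt a b := Ioo_subset_Ioc_self.trans (Ioc_subset_stInt hx)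
  have hm0 : ∀ u ∈ stInt a b, 0 ≤ mDen μ σ x₀ u := fun u hu => (H.mDen_pos hu).le
  rw [cbar]
  split_ifs with hmS
  · have hSm : MeasurableSet (stInt a b) := H.isOpen.measurableSet
    have hunion : Ioo a x ∪ (stInt a b \ Ioo a x) = stInt a b := union_sdiff_cancel hA
    have hcmS : IntegrableOn (fun u => c u * mDen μ σ x₀ u) (stInt a b) := by
      refine (hmS.const_mul cb).mono' ((hc.mul H.continuousOn_mDen).aestronglyMeasurable hSm) ?_
      filter_upwards [ae_restrict_mem hSm] with u hu
      rw [norm_mul, Real.norm_of_nonneg (hcnn u hu), Real.norm_of_nonneg (hm0 u hu)]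
      exact mul_le_mul_of_nonneg_right (hccb u hu) (hm0 u hu)
    have hcheb := setIntegral_mul_le_of_le_of_le (k := c x) disjoint_sdiff_right
      measurableSet_Ioo (hSm.diff measurableSet_Ioo) (hmS.mono_set hA) (hmS.mono_set sdiff_subset)
      (hcmS.mono_set hA) (hcmS.mono_set sdiff_subset) (fun u hu => hm0 u (hunion ▸ hu))
      (fun u hu => hcmono (hA hu) hx hu.2.le)
      fun u hu => hcmono hx hu.1 (le_of_not_gt fun h => hu.2 ⟨hu.1.1, h⟩)
    rw [hunion] at hcheb
    have hMS : 0 < ∫ u in stInt a b, mDen μ σ x₀ u := (H.Mab_pos hx).trans_le <|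
      setIntegral_mono_set hmS ((ae_restrict_mem hSm).mono hm0) hA.eventuallyLE
    rw [div_mul_eq_mul_div, le_div_iff₀ hMS]
    exact hcheb
  · rw [Mab, ← integral_const_mul]
    exact setIntegral_mono_on (H.integrableOn_mul_mDen hc hca hx)
      ((H.integrableOn_mDen x hx).const_mul cb) measurableSet_Ioo fun u hu =>
        mul_le_mul_of_nonneg_right (hccb u (hA hu)) (hm0 u (hA hu))

lemma exists_forall_hF_le_right (hc : ContinuousOn c (stInt a b))
    (hca : Tendsto c (𝓝[>] a) (𝓝 ca)) (hcnn : ∀ x ∈ stInt a b, 0 ≤ c x)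
    (hcmono : MonotoneOn c (stInt a b)) (hcb : Tendsto c (atB b) (𝓝 cb)) (hγ : 0 ≤ γ)
    (hsMb : Tendsto (fun x => sDen μ σ x₀ x * Mab μ σ x₀ a x) (atB b) atTop) {α : ℝ}
    (hgap : γ * cbar μ σ c x₀ a b cb < α) :
    ∃ tb ∈ stInt a b, ∃ β < α, ∀ x ∈ stInt a b, tb < x → hF μ σ c x₀ a p γ x ≤ β := by
  have hev : ∀ᶠ x in atB b, p / (sDen μ σ x₀ x * Mab μ σ x₀ a x)
      < (α - γ * cbar μ σ c x₀ a b cb) / 2 :=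
    (tendsto_const_nhds.div_atTop hsMb).eventually (eventually_lt_nhds (by linarith))
  obtain ⟨tb, htb, hev⟩ := (atB_hasBasis H.lt).eventually_iff.1 hev
  refine ⟨tb, htb, (γ * cbar μ σ c x₀ a b cb + α) / 2, by linarith, fun x hx hxtb => ?_⟩
  have hM := H.Mab_pos hx
  have hs := sDen_pos μ σ x₀ x
  calc hF μ σ c x₀ a p γ x
      = (γ * (∫ u in Ioo a x, c u * mDen μ σ x₀ u) + p * (sDen μ σ x₀ x)⁻¹)
          / Mab μ σ x₀ a x := by
        rw [← H.hF_mul_Mab hc hca hx, mul_div_cancel_right₀ _ hM.ne']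
    _ ≤ (γ * (cbar μ σ c x₀ a b cb * Mab μ σ x₀ a x) + p * (sDen μ σ x₀ x)⁻¹)
          / Mab μ σ x₀ a x := by
        gcongr
        exact H.integral_mul_mDen_le_cbar hc hca hcnn hcmono hcb hx
    _ = γ * cbar μ σ c x₀ a b cb + p / (sDen μ σ x₀ x * Mab μ σ x₀ a x) := by
        field_simp
    _ ≤ (γ * cbar μ σ c x₀ a b cb + α) / 2 := by linarith [hev ⟨hxtb, hx⟩]

lemma exists_forall_hF_le_sub (hc : ContinuousOn c (stInt a b))
    (hca : Tendsto c (𝓝[>] a) (𝓝 ca)) (hcnn : ∀ x ∈ stInt a b, 0 ≤ c x)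
    (hcmono : MonotoneOn c (stInt a b)) (hcb : Tendsto c (atB b) (𝓝 cb)) (hγ : 0 ≤ γ)
    (hp : 0 < p) {xhat : ℝ} (hxhat : xhat ∈ stInt a b) (hμmono : StrictMonoOn μ (Ioo a xhat))
    (hsMb : Tendsto (fun x => sDen μ σ x₀ x * Mab μ σ x₀ a x) (atB b) atTop) {yh : ℝ}
    (hymax : ∀ x ∈ stInt a b, x ≠ yh → hF μ σ c x₀ a p γ x < hF μ σ c x₀ a p γ yh)
    (hcbar : γ * cbar μ σ c x₀ a b cb < hF μ σ c x₀ a p γ yh) {ε : ℝ} (hε : 0 < ε) :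
    ∃ δ > 0, ∀ x ∈ stInt a b, x ∉ Ioo (yh - ε) (yh + ε) →
      hF μ σ c x₀ a p γ x ≤ hF μ σ c x₀ a p γ yh - δ := by
  obtain ⟨ta, hta, βa, hβa, hleft⟩ :=
    H.exists_forall_hF_le_left hc hca hcmono hγ hp hxhat hμmono
      (forall_le_of_forall_ne_lt hymax)
  obtain ⟨tb, htb, βb, hβb, hright⟩ :=
    H.exists_forall_hF_le_right (p := p) hc hca hcnn hcmono hcb hγ hsMb hcbar
  exact exists_forall_le_sub_of_forall_lt H.ordConnected (H.continuousOn_hF hc hca) hymax hta htb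
    (max_lt hβa hβb) (fun x hx h => (hleft x hx h).trans (le_max_left _ _))
    (fun x hx h => (hright x hx h).trans (le_max_right _ _)) hε

end Setting

lemma admissible_iff {a : ℝ} {b : EReal} {w y : ℝ} :
    (a < w ∧ w < y ∧ (y : EReal) < b) ↔ (w ∈ stInt a b ∧ y ∈ stInt a b ∧ w < y) :=
  ⟨fun ⟨h1, h2, h3⟩ => ⟨⟨h1, lt_trans (by exact_mod_cast h2) h3⟩, ⟨h1.trans h2, h3⟩, h2⟩,
    fun ⟨hw, hy, hwy⟩ => ⟨hw.1, hwy, hy.2⟩⟩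

end ImpulseControl

open ImpulseControl

theorem statement19_general    (a : ℝ) (b : EReal) (hab : (a : EReal) < b)
    (μ σ : ℝ → ℝ) (x₀ : ℝ) (hx₀ : x₀ ∈ stInt a b)
    (hμcont : ContinuousOn μ (stInt a b)) (hσcont : ContinuousOn σ (stInt a b))
    (hσpos : ∀ x ∈ stInt a b, 0 < (σ x) ^ 2)
    (hMfin : ∀ x ∈ stInt a b, IntegrableOn (mDen μ σ x₀) (Set.Ioo a x))
    (hsa : Tendsto (sDen μ σ x₀) (𝓝[>] a) atTop)
    (hsMb : Tendsto (fun x => sDen μ σ x₀ x * Mab μ σ x₀ a x) (atB b) atTop)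
    (μa : ℝ) (hμa : Tendsto μ (𝓝[>] a) (𝓝 μa))
    (c : ℝ → ℝ) (hccont : ContinuousOn c (stInt a b))
    (hcnn : ∀ x ∈ stInt a b, 0 ≤ c x) (hcmono : MonotoneOn c (stInt a b))
    (ca cb : ℝ) (hca : Tendsto c (𝓝[>] a) (𝓝 ca)) (hcb : Tendsto c (atB b) (𝓝 cb))
    (xhat0 : ℝ) (hxhat0 : xhat0 ∈ stInt a b)
    (hμmono : StrictMonoOn μ (Set.Ioo a xhat0))
    (p γ : ℝ) (hp : 0 < p) (hγ : 0 < γ)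
    (K₀ : ℝ) (hK₀ : 0 < K₀)
    (hint : ∃ w y : ℝ, a < w ∧ w < y ∧ (y : EReal) < b ∧
      γ * cbar μ σ c x₀ a b cb < FF μ σ c x₀ a p K₀ γ w y)
    (yh : ℝ) (hyh : yh ∈ stInt a b)
    (hymax : ∀ x ∈ stInt a b, x ≠ yh → hF μ σ c x₀ a p γ x < hF μ σ c x₀ a p γ yh)
    (wstar ystar : ℝ → ℝ)
    (hmax : ∀ K : ℝ, 0 < K → K ≤ K₀ →
      a < wstar K ∧ wstar K < ystar K ∧ ((ystar K : ℝ) : EReal) < b ∧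
      (∀ w y : ℝ, a < w → w < y → (y : EReal) < b →
        FF μ σ c x₀ a p K γ w y ≤ FF μ σ c x₀ a p K γ (wstar K) (ystar K)) ∧
      (∀ w y : ℝ, a < w → w < y → (y : EReal) < b →
        (∀ w' y' : ℝ, a < w' → w' < y' → (y' : EReal) < b →
          FF μ σ c x₀ a p K γ w' y' ≤ FF μ σ c x₀ a p K γ w y) →
        w = wstar K ∧ y = ystar K)) :
    (∀ K₁ K₂ : ℝ, 0 < K₁ → K₁ < K₂ → K₂ ≤ K₀ →
      FF μ σ c x₀ a p K₂ γ (wstar K₂) (ystar K₂) <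
        FF μ σ c x₀ a p K₁ γ (wstar K₁) (ystar K₁)) ∧
    (∀ K : ℝ, 0 < K → K ≤ K₀ →
      FF μ σ c x₀ a p K γ (wstar K) (ystar K) < hF μ σ c x₀ a p γ yh) ∧
    Tendsto (fun K => FF μ σ c x₀ a p K γ (wstar K) (ystar K)) (𝓝[>] (0 : ℝ))
      (𝓝 (hF μ σ c x₀ a p γ yh)) ∧
    Tendsto wstar (𝓝[>] (0 : ℝ)) (𝓝 yh) ∧
    Tendsto ystar (𝓝[>] (0 : ℝ)) (𝓝 yh) := by
  have H : Setting a b μ σ x₀ μa := ⟨hab, hx₀, hμcont, hσcont, hσpos, hMfin, hsa, hμa⟩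
  have hh := H.continuousOn_hF (p := p) (γ := γ) hccont hca
  have hle := forall_le_of_forall_ne_lt hymax
  have hω0 := fun v (hv : v ∈ stInt a b) => H.Mab_mul_sDen_pos hv
  have hFF := fun K w y (hP : w ∈ stInt a b ∧ y ∈ stInt a b ∧ w < y) =>
    H.FF_eq (p := p) (γ := γ) hccont hca hP.1 hP.2.1 K
  have hD := fun w y (hP : w ∈ stInt a b ∧ y ∈ stInt a b ∧ w < y) =>
    H.xiF_sub_pos hP.1 hP.2.1 hP.2.2
  have hA := fun w y (hP : w ∈ stInt a b ∧ y ∈ stInt a b ∧ w < y) =>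
    weightedMean_le H.ordConnected hh H.continuousOn_Mab_mul_sDen hω0 hP.1 hP.2.1 hP.2.2
      fun v hv => hle v (H.ordConnected.out hP.1 hP.2.1 hv)
  have hopt := fun K (hK : 0 < K) (hKK₀ : K ≤ K₀) =>
    have ⟨h1, h2, h3, h4, _⟩ := hmax K hK hKK₀
    And.intro (admissible_iff.1 ⟨h1, h2, h3⟩) fun w y hP =>
      have ⟨h1, h2, h3⟩ := admissible_iff.2 hP
      h4 w y h1 h2 h3
  have happrox := fun l (hl : l < hF μ σ c x₀ a p γ yh) => exists_lt_weightedMean H.isOpen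
    H.ordConnected hh H.continuousOn_Mab_mul_sDen hω0 hyh hl
  have hcbar : γ * cbar μ σ c x₀ a b cb < hF μ σ c x₀ a p γ yh := by
    obtain ⟨w, y, h1, h2, h3, hlt⟩ := hint
    have hP := admissible_iff.1 ⟨h1, h2, h3⟩
    linarith [hFF K₀ w y hP, hA w y hP, div_pos hK₀ (hD w y hP)]
  refine ⟨fun K₁ K₂ => optimalValue_strictAnti hFF hD hopt,
    fun K => optimalValue_lt hFF hD hA fun K hK hKK₀ => (hopt K hK hKK₀).1,
    tendsto_optimalValue hFF hD hA happrox hK₀ hopt,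
    tendsto_optimizers hFF hD hA happrox hK₀ hopt fun ε hε => ?_⟩
  exact exists_weightedMean_le_sub_of_far H.isOpen H.ordConnected hh H.continuousOn_Mab_mul_sDen
    hω0 hyh hle (fun ε hε => H.exists_forall_hF_le_sub hccont hca hcnn hcmono hcb hγ.le hp
      hxhat0 hμmono hsMb hymax hcbar hε) hε

theorem statement19    (a : ℝ) (b : EReal) (hab : (a : EReal) < b)
    (μ σ : ℝ → ℝ) (x₀ : ℝ) (hx₀ : x₀ ∈ stInt a b)
    (hμcont : ContinuousOn μ (stInt a b)) (hσcont : ContinuousOn σ (stInt a b))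
    (hσpos : ∀ x ∈ stInt a b, 0 < (σ x) ^ 2)
    (hMfin : ∀ x ∈ stInt a b, IntegrableOn (mDen μ σ x₀) (Set.Ioo a x))
    (hsa : Tendsto (sDen μ σ x₀) (𝓝[>] a) atTop)
    (hsMb : Tendsto (fun x => sDen μ σ x₀ x * Mab μ σ x₀ a x) (atB b) atTop)
    (hbnat : Tendsto (xiF μ σ x₀ a) (atB b) atTop)
    (μa : ℝ) (hμa : Tendsto μ (𝓝[>] a) (𝓝 μa))
    (c : ℝ → ℝ) (hccont : ContinuousOn c (stInt a b))
    (hcnn : ∀ x ∈ stInt a b, 0 ≤ c x) (hcmono : MonotoneOn c (stInt a b))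
    (ca cb : ℝ) (hca : Tendsto c (𝓝[>] a) (𝓝 ca)) (hcb : Tendsto c (atB b) (𝓝 cb))
    (hca0 : 0 ≤ ca) (hcacb : ca < cb)
    (xhat0 : ℝ) (hxhat0 : xhat0 ∈ stInt a b)
    (hμmono : StrictMonoOn μ (Set.Ioo a xhat0))
    (hμconc : ConcaveOn ℝ {x : ℝ | xhat0 < x ∧ (x : EReal) < b} μ)
    (hcconc : ConcaveOn ℝ {x : ℝ | xhat0 < x ∧ (x : EReal) < b} c)
    (p γ : ℝ) (hp : 0 < p) (hγ : 0 < γ)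
    (K₀ : ℝ) (hK₀ : 0 < K₀)
    (hint : ∃ w y : ℝ, a < w ∧ w < y ∧ (y : EReal) < b ∧
      γ * cbar μ σ c x₀ a b cb < FF μ σ c x₀ a p K₀ γ w y)
    (yh : ℝ) (hyh : yh ∈ stInt a b)
    (hymax : ∀ x ∈ stInt a b, x ≠ yh → hF μ σ c x₀ a p γ x < hF μ σ c x₀ a p γ yh)
    (wstar ystar : ℝ → ℝ)
    (hmax : ∀ K : ℝ, 0 < K → K ≤ K₀ →
      a < wstar K ∧ wstar K < ystar K ∧ ((ystar K : ℝ) : EReal) < b ∧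
      (∀ w y : ℝ, a < w → w < y → (y : EReal) < b →
        FF μ σ c x₀ a p K γ w y ≤ FF μ σ c x₀ a p K γ (wstar K) (ystar K)) ∧
      (∀ w y : ℝ, a < w → w < y → (y : EReal) < b →
        (∀ w' y' : ℝ, a < w' → w' < y' → (y' : EReal) < b →
          FF μ σ c x₀ a p K γ w' y' ≤ FF μ σ c x₀ a p K γ w y) →
        w = wstar K ∧ y = ystar K)) :
    (∀ K₁ K₂ : ℝ, 0 < K₁ → K₁ < K₂ → K₂ ≤ K₀ →
      FF μ σ c x₀ a p K₂ γ (wstar K₂) (ystar K₂) <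
        FF μ σ c x₀ a p K₁ γ (wstar K₁) (ystar K₁)) ∧
    (∀ K : ℝ, 0 < K → K ≤ K₀ →
      FF μ σ c x₀ a p K γ (wstar K) (ystar K) < hF μ σ c x₀ a p γ yh) ∧
    Tendsto (fun K => FF μ σ c x₀ a p K γ (wstar K) (ystar K)) (𝓝[>] (0 : ℝ))
      (𝓝 (hF μ σ c x₀ a p γ yh)) ∧
    Tendsto wstar (𝓝[>] (0 : ℝ)) (𝓝 yh) ∧
    Tendsto ystar (𝓝[>] (0 : ℝ)) (𝓝 yh) :=
  statement19_general a b hab μ σ x₀ hx₀ hμcont hσcont hσpos hMfin hsa hsMb μa hμa c hccont hcnn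
    hcmono ca cb hca hcb xhat0 hxhat0 hμmono p γ hp hγ K₀ hK₀ hint yh hyh hymax wstar ystar hmax
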